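/- Let $C \subseteq \mathbb{R}^d$ be compact with at least one bounded gap. Then $\tau_\varepsilon(C) \to \tau(C)$ as $\varepsilon \to 0^+$. -/

import Mathlib

open Set
open scoped ENNReal Classical

noncomputable section

/-- `ℝ^d` with the Euclidean metric. -/
abbrev Euc (d : ℕ) := EuclideanSpace ℝ (Fin d)

/-- `G` is a gap of `C`: an (open) path-connected component of the complement of `C`. -/
def IsGap {d : ℕ} (C G : Set (Euc d)) : Prop :=
  ∃ x ∈ Cᶜ, G = {y | JoinedIn Cᶜ x y}

/-- The bounded gaps of `C`. -/
def boundedGaps {d : ℕ} (C : Set (Euc d)) : Set (Set (Euc d)) :=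
  {G | IsGap C G ∧ Bornology.IsBounded G}

/-- The union of all unbounded gaps of `C` (for `d = 1` this is the union of the two
unbounded intervals; for `d ≥ 2` it is the single unbounded component). -/
def unboundedGapsUnion {d : ℕ} (C : Set (Euc d)) : Set (Euc d) :=
  ⋃₀ {G | IsGap C G ∧ ¬ Bornology.IsBounded G}

/-- Distance between two sets, as an extended nonnegative real. -/
def setEDist {d : ℕ} (s t : Set (Euc d)) : ℝ≥0∞ :=
  ⨅ x ∈ s, EMetric.infEdist x t

/-- The Falconer–Yavicoli thickness `τ(C)` of a set `C ⊆ ℝ^d`: the infimum, over all bounded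
gaps `G`, of the distance from `G` to the union of all other gaps of diameter at least
`diam G` together with the unbounded gap, divided by `diam G`.  (For bounded gaps enumerated
with non-increasing diameters this agrees with the definition
`⨅ n, dist (Gₙ, G₁ ∪ ⋯ ∪ Gₙ₋₁ ∪ E) / diam Gₙ`.)  If `C` has no bounded gap, `τ(C)` is `∞`
when `C` has non-empty interior and `0` otherwise. -/
def thickness {d : ℕ} (C : Set (Euc d)) : ℝ≥0∞ :=
  if (boundedGaps C).Nonempty then
    ⨅ G ∈ boundedGaps C,
      setEDist G
        ((⋃₀ {G' | G' ∈ boundedGaps C ∧ G' ≠ G ∧ EMetric.diam G ≤ EMetric.diam G'})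
          ∪ unboundedGapsUnion C) / EMetric.diam G
  else if (interior C).Nonempty then ⊤ else 0

/-- The `ε`-thickness `τ_ε(C)`: infimum over bounded gaps `G` and boundary points `u` of `G`
of `dist (u, ⋃_{G' ∈ H_{ε,G}} G' ∪ E) / diam G`, where `H_{ε,G}` consists of the gaps
`G' ≠ G` with `(1-ε) diam G < diam G'`. -/
def epsThickness {d : ℕ} (ε : ℝ) (C : Set (Euc d)) : ℝ≥0∞ :=
  ⨅ G ∈ boundedGaps C, ⨅ u ∈ frontier G,
    EMetric.infEdist u
      ((⋃₀ {G' | G' ∈ boundedGaps C ∧ G' ≠ G ∧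
          ENNReal.ofReal (1 - ε) * EMetric.diam G < EMetric.diam G'})
        ∪ unboundedGapsUnion C) / EMetric.diam G

/-- The point of `ℝ^{2d}` whose first `d` coordinates are those of `y` and whose last `d`
coordinates are those of `z`. -/
def pairPoint {d : ℕ} (y z : Euc d) : Euc (2 * d) :=
  WithLp.toLp 2 (fun i => if h : (i : ℕ) < d then y ⟨(i : ℕ), h⟩
           else z ⟨(i : ℕ) - d, by have := i.isLt; omega⟩)

/-- The product `C₁ × C₂ ⊆ ℝ^{2d}` of two subsets of `ℝ^d`. -/
def setProd {d : ℕ} (C₁ C₂ : Set (Euc d)) : Set (Euc (2 * d)) :=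
  {p | ∃ y ∈ C₁, ∃ z ∈ C₂, p = pairPoint y z}

/-- The pinned distance set `Δ_x(A) = {|x - y| : y ∈ A}`. -/
def pinnedDist {m : ℕ} (x : Euc m) (A : Set (Euc m)) : Set ℝ :=
  (fun y => dist x y) '' A

/-- The index `i` of `{1, …, d}` viewed inside `{1, …, 2d}` (first block). -/
def lo {d : ℕ} (i : Fin d) : Fin (2 * d) := ⟨(i : ℕ), by have := i.isLt; omega⟩

/-- The index `i + d` of `{1, …, 2d}` (second block). -/
def hi {d : ℕ} (i : Fin d) : Fin (2 * d) := ⟨(i : ℕ) + d, by have := i.isLt; omega⟩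

/-- The map `g_{x,t} : ℝ^d → ℝ^d`, `g_{x,t}(y)_i = x_{i+d} + √(t²/d - (x_i - y_i)²)`. -/
def gMap {d : ℕ} (x : Euc (2 * d)) (t : ℝ) (y : Euc d) : Euc d :=
  WithLp.toLp 2 (fun i => x (hi i) + Real.sqrt (t ^ 2 / (d : ℝ) - (x (lo i) - y i) ^ 2))

/-- `u` is a right endpoint of the gap `H`: a boundary point of `H` such that
`u + (ε, …, ε) ∉ H` for every `ε > 0`. -/
def IsRightEndpoint {d : ℕ} (H : Set (Euc d)) (u : Euc d) : Prop :=
  u ∈ frontier H ∧ ∀ ε > (0 : ℝ), ((WithLp.toLp 2 (fun i => u i + ε) : Euc d)) ∉ H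

/-- A closed axis-parallel rectangle (box) in `ℝ^d`. -/
def IsClosedBox {d : ℕ} (R : Set (Euc d)) : Prop :=
  ∃ a b : Fin d → ℝ, R = {y : Euc d | ∀ i, y i ∈ Set.Icc (a i) (b i)}

/-! The upper bound `τ_ε(C) ≤ τ(C)` holds because every gap at least as large as `G` belongs to
`H_ε(G)`, and the segment from a point of `G` to a point outside `G` crosses `∂G` no farther
from its endpoint. For the lower bound `(1 - ε) τ(C) ≤ τ_ε(C)`, take a gap `G' ∈ H_ε(G)`: either
`diam G ≤ diam G'` and the thickness bound at `G` applies, or `G'` is smaller, so that `G` is one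
of the larger gaps of `G'`, and the thickness bound at `G'` gives
`dist(G, G') ≥ τ(C) diam G' ≥ (1 - ε) τ(C) diam G`. Letting `ε → 0` squeezes `τ_ε(C)`. -/

open Filter Metric Topology

theorem IsOpen.exists_mem_frontier_edist_le {E : Type*} [NormedAddCommGroup E]
    [NormedSpace ℝ E] {G : Set E} (hG : IsOpen G) {x t : E} (hx : x ∈ G) (ht : t ∉ G) :
    ∃ u ∈ frontier G, edist u t ≤ edist x t := by
  have hseg : ¬ segment ℝ x t ⊆ G := fun h => ht (h (right_mem_segment ℝ x t))
  have hcl : ¬ closure G ∩ segment ℝ x t ⊆ G := fun h =>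
    hseg ((convex_segment x t).isPreconnected.subset_of_closure_inter_subset hG
      ⟨x, left_mem_segment ℝ x t, hx⟩ h)
  obtain ⟨u, ⟨huG, hu⟩, hun⟩ := not_subset.mp hcl
  refine ⟨u, hG.frontier_eq ▸ ⟨huG, hun⟩, ?_⟩
  rw [edist_dist, edist_dist]
  exact ENNReal.ofReal_le_ofReal (mem_closedBall.mp (segment_subset_closedBall_right x t hu))

theorem IsOpen.ediam_pos {E : Type*} [NormedAddCommGroup E] [NormedSpace ℝ E] [Nontrivial E]
    {G : Set E} (hG : IsOpen G) (hne : G.Nonempty) : 0 < ediam G := by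
  obtain ⟨x, hx⟩ := hne
  exact ediam_pos_iff.mpr (infinite_of_mem_nhds x (hG.mem_nhds hx)).nontrivial

theorem ENNReal.tendsto_ofReal_one_sub_mul (a : ℝ≥0∞) :
    Tendsto (fun ε : ℝ => ENNReal.ofReal (1 - ε) * a) (𝓝 0) (𝓝 a) := by
  have hc : Continuous fun ε : ℝ => ENNReal.ofReal (1 - ε) :=
    ENNReal.continuous_ofReal.comp (continuous_const.sub continuous_id)
  have h : Tendsto (fun ε : ℝ => ENNReal.ofReal (1 - ε)) (𝓝 0) (𝓝 1) := by
    simpa using hc.tendsto 0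
  simpa using ENNReal.Tendsto.mul_const h (by simp)

section Gaps

variable {d : ℕ} {C G G' : Set (Euc d)}

theorem IsGap.nonempty (h : IsGap C G) : G.Nonempty := by
  obtain ⟨x, hx, rfl⟩ := h
  exact ⟨x, JoinedIn.refl hx⟩

theorem IsGap.isOpen (hC : IsClosed C) (h : IsGap C G) : IsOpen G := by
  obtain ⟨x, -, rfl⟩ := h
  exact hC.isOpen_compl.pathComponentIn x

theorem IsGap.eq_or_disjoint (h : IsGap C G) (h' : IsGap C G') : G = G' ∨ Disjoint G G' := by
  obtain ⟨x, -, rfl⟩ := h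
  obtain ⟨x', -, rfl⟩ := h'
  refine or_iff_not_imp_right.mpr fun hd => ?_
  obtain ⟨z, hz, hz'⟩ := not_disjoint_iff.mp hd
  exact (pathComponentIn_congr hz).symm.trans (pathComponentIn_congr hz')

theorem ediam_ne_zero_of_mem_boundedGaps [Nontrivial (Euc d)] (hC : IsClosed C)
    (hG : G ∈ boundedGaps C) : ediam G ≠ 0 :=
  ((hG.1.isOpen hC).ediam_pos hG.1.nonempty).ne'

end Gaps

section Thickness

variable {d : ℕ} {C G : Set (Euc d)} {ε : ℝ}

/-- The union `G₁ ∪ ⋯ ∪ Gₙ₋₁ ∪ E` in the definition of thickness, for `G = Gₙ`. -/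
abbrev largerGapsUnion (C G : Set (Euc d)) : Set (Euc d) :=
  (⋃₀ {G' | G' ∈ boundedGaps C ∧ G' ≠ G ∧ ediam G ≤ ediam G'}) ∪ unboundedGapsUnion C

/-- `⋃_{i ∈ H_{ε,n}} Gᵢ ∪ E`, for `G = Gₙ`. -/
abbrev nearlyLargerGapsUnion (ε : ℝ) (C G : Set (Euc d)) : Set (Euc d) :=
  (⋃₀ {G' | G' ∈ boundedGaps C ∧ G' ≠ G ∧ ENNReal.ofReal (1 - ε) * ediam G < ediam G'})
    ∪ unboundedGapsUnion C

theorem setEDist_le_edist {s t : Set (Euc d)} {x y : Euc d} (hx : x ∈ s) (hy : y ∈ t) :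
    setEDist s t ≤ edist x y :=
  (iInf₂_le x hx).trans (infEDist_le_edist_of_mem hy)

theorem le_setEDist {s t : Set (Euc d)} {c : ℝ≥0∞} (h : ∀ x ∈ s, ∀ y ∈ t, c ≤ edist x y) :
    c ≤ setEDist s t :=
  le_iInf₂ fun x hx => le_infEDist.mpr (h x hx)

theorem thickness_eq_iInf (hgap : (boundedGaps C).Nonempty) :
    thickness C = ⨅ G ∈ boundedGaps C, setEDist G (largerGapsUnion C G) / ediam G :=
  if_pos hgap

theorem epsThickness_eq_iInf : epsThickness ε C = ⨅ G ∈ boundedGaps C, ⨅ u ∈ frontier G,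
    infEDist u (nearlyLargerGapsUnion ε C G) / ediam G := rfl

theorem disjoint_largerGapsUnion (hG : G ∈ boundedGaps C) : Disjoint G (largerGapsUnion C G) := by
  refine disjoint_union_right.mpr ⟨disjoint_sUnion_right.mpr ?_, disjoint_sUnion_right.mpr ?_⟩
  · rintro G' ⟨hG', hne, -⟩
    exact (hG.1.eq_or_disjoint hG'.1).resolve_left hne.symm
  · rintro G' ⟨hG', hunb⟩
    exact (hG.1.eq_or_disjoint hG').resolve_left fun h => hunb (h ▸ hG.2)

theorem largerGapsUnion_subset_nearlyLargerGapsUnion (hd : ediam G ≠ 0) (hdt : ediam G ≠ ⊤)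
    (hε : 0 < ε) : largerGapsUnion C G ⊆ nearlyLargerGapsUnion ε C G := by
  refine union_subset_union_left _ (sUnion_mono fun G' ⟨hG', hne, hle⟩ => ⟨hG', hne, ?_⟩)
  calc ENNReal.ofReal (1 - ε) * ediam G < 1 * ediam G :=
        ENNReal.mul_lt_mul_left hd hdt (ENNReal.ofReal_lt_one.mpr (by linarith))
    _ = ediam G := one_mul _
    _ ≤ ediam G' := hle

theorem thickness_mul_ediam_le_edist (hG : G ∈ boundedGaps C) {x t : Euc d} (hx : x ∈ G)
    (ht : t ∈ largerGapsUnion C G) : thickness C * ediam G ≤ edist x t := by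
  refine (ENNReal.mul_le_of_le_div ?_).trans (setEDist_le_edist hx ht)
  rw [thickness_eq_iInf ⟨G, hG⟩]
  exact iInf₂_le G hG

theorem epsThickness_le_thickness [Nontrivial (Euc d)] (hC : IsClosed C)
    (hgap : (boundedGaps C).Nonempty) (hε : 0 < ε) : epsThickness ε C ≤ thickness C := by
  rw [thickness_eq_iInf hgap]
  refine le_iInf₂ fun G hG => ?_
  have hd := ediam_ne_zero_of_mem_boundedGaps hC hG
  have hdt := hG.2.ediam_ne_top
  rw [ENNReal.le_div_iff_mul_le (.inl hd) (.inl hdt)]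
  refine le_setEDist fun x hx t ht => ?_
  obtain ⟨u, hu, hut⟩ :=
    (hG.1.isOpen hC).exists_mem_frontier_edist_le hx
      ((disjoint_largerGapsUnion hG).notMem_of_mem_right ht)
  calc epsThickness ε C * ediam G
      ≤ infEDist u (nearlyLargerGapsUnion ε C G) / ediam G * ediam G := by
        gcongr
        exact iInf₂_le_of_le G hG (iInf₂_le u hu)
    _ ≤ infEDist u (nearlyLargerGapsUnion ε C G) := ENNReal.mul_le_of_le_div le_rfl
    _ ≤ edist u t := infEDist_le_edist_of_mem
        (largerGapsUnion_subset_nearlyLargerGapsUnion hd hdt hε ht)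
    _ ≤ edist x t := hut

theorem ofReal_one_sub_mul_thickness_le_epsThickness [Nontrivial (Euc d)] (hC : IsClosed C)
    (hε : 0 ≤ ε) : ENNReal.ofReal (1 - ε) * thickness C ≤ epsThickness ε C := by
  rw [epsThickness_eq_iInf]
  refine le_iInf₂ fun G hG => le_iInf₂ fun u hu => ?_
  rw [ENNReal.le_div_iff_mul_le (.inl (ediam_ne_zero_of_mem_boundedGaps hC hG))
    (.inl hG.2.ediam_ne_top)]
  refine le_infEDist.mpr fun t ht => ?_
  have hclosed : IsClosed {y | ENNReal.ofReal (1 - ε) * thickness C * ediam G ≤ edist y t} :=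
    isClosed_le continuous_const (continuous_id.edist continuous_const)
  refine hclosed.closure_subset_iff.mpr (fun x hx => ?_) (frontier_subset_closure hu)
  have hshrink : ENNReal.ofReal (1 - ε) * thickness C * ediam G ≤ thickness C * ediam G := by
    rw [mul_assoc]
    exact mul_le_of_le_one_left' (ENNReal.ofReal_le_one.mpr (by linarith))
  rcases ht with ⟨G', ⟨hG', hne, hlt⟩, htG'⟩ | ht
  · rcases le_or_gt (ediam G) (ediam G') with hle | hgt
    · exact hshrink.trans (thickness_mul_ediam_le_edist hG hx (.inl ⟨G', ⟨hG', hne, hle⟩, htG'⟩))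
    · calc ENNReal.ofReal (1 - ε) * thickness C * ediam G
          = thickness C * (ENNReal.ofReal (1 - ε) * ediam G) := by ring
        _ ≤ thickness C * ediam G' := by gcongr
        _ ≤ edist t x :=
            thickness_mul_ediam_le_edist hG' htG' (.inl ⟨G, ⟨hG, hne.symm, hgt.le⟩, hx⟩)
        _ = edist x t := edist_comm t x
  · exact hshrink.trans (thickness_mul_ediam_le_edist hG hx (.inr ht))

theorem epsThickness_eq_top_of_subsingleton [Subsingleton (Euc d)] : epsThickness ε C = ⊤ := by
  refine iInf₂_eq_top.mpr fun G hG => ?_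
  simp [Subsingleton.eq_univ_of_nonempty hG.1.nonempty]

theorem thickness_eq_top_of_subsingleton [Subsingleton (Euc d)]
    (hgap : (boundedGaps C).Nonempty) : thickness C = ⊤ := by
  refine (thickness_eq_iInf hgap).trans (iInf₂_eq_top.mpr fun G hG => ?_)
  have hempty : largerGapsUnion C G = ∅ := by
    simpa [Subsingleton.eq_univ_of_nonempty hG.1.nonempty] using disjoint_largerGapsUnion hG
  have hfar : setEDist G ∅ = ⊤ := iInf₂_eq_top.mpr fun _ _ => infEDist_empty
  rw [hempty, hfar, ENNReal.top_div_of_ne_top hG.2.ediam_ne_top]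

end Thickness

/-- `τ_ε(C) → τ(C)` as `ε → 0⁺`. -/
theorem epsThickness_tendsto_thickness
    {d : ℕ} (C : Set (Euc d)) (hC : IsCompact C) (hgap : (boundedGaps C).Nonempty) :
    Filter.Tendsto (fun ε : ℝ => epsThickness ε C)
      (nhdsWithin 0 (Set.Ioi 0)) (nhds (thickness C)) := by
  rcases subsingleton_or_nontrivial (Euc d) with _ | _
  · simpa only [epsThickness_eq_top_of_subsingleton, thickness_eq_top_of_subsingleton hgap]
      using tendsto_const_nhds
  refine tendsto_of_tendsto_of_tendsto_of_le_of_le'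
    ((ENNReal.tendsto_ofReal_one_sub_mul _).mono_left nhdsWithin_le_nhds) tendsto_const_nhds ?_ ?_
  all_goals filter_upwards [self_mem_nhdsWithin] with ε (hε : 0 < ε)
  · exact ofReal_one_sub_mul_thickness_le_epsThickness hC.isClosed hε.le
  · exact epsThickness_le_thickness hC.isClosed hgap hε

end
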